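/- arXiv:0811.2256 — 4 statements merged into one kernel-verified Lean document; each statement's English description precedes it below -/
import Mathlib

section
/- Let (f_ε)_{ε∈(0,1]} and (g_ε)_{ε∈(0,1]} be families of smooth functions ℝ→ℝ such that every f_ε and every g_ε is a bijection of ℝ, and such that the four families (f_ε), (g_ε), (f_ε⁻¹), (g_ε⁻¹) are all tempered moderate. If the family (g_ε − f_ε) is tempered negligible, then the family (f_ε⁻¹ − g_ε⁻¹) is tempered negligible. -/
/-- A family `(f_ε)_{ε ∈ (0,1]}` of smooth functions `ℝ → ℝ` is tempered moderate:
for every derivative order bound `m` there are `q, N ∈ ℕ`, `C > 0` and `ε₀ ∈ (0,1]` such that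
`|f_ε^(k)(x)| ≤ C (1+|x|)^q ε^{-N}` for all `ε ≤ ε₀`, `x ∈ ℝ`, `k ≤ m`. -/
def TempModerate (f : ℝ → ℝ → ℝ) : Prop :=
  ∀ m : ℕ, ∃ q N : ℕ, ∃ C : ℝ, 0 < C ∧ ∃ ε₀ ∈ Set.Ioc (0:ℝ) 1,
    ∀ ε ∈ Set.Ioc (0:ℝ) 1, ε ≤ ε₀ →
      ∀ x : ℝ, ∀ k ≤ m, |iteratedDeriv k (f ε) x| ≤ C * (1 + |x|) ^ q / ε ^ N

/-- A family `(f_ε)_{ε ∈ (0,1]}` of smooth functions `ℝ → ℝ` is tempered negligible: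
for every `m` there is `q ∈ ℕ` such that for every `p ∈ ℕ` there are `C > 0`, `ε₀ ∈ (0,1]` with
`|f_ε^(k)(x)| ≤ C (1+|x|)^q ε^p` for all `ε ≤ ε₀`, `x ∈ ℝ`, `k ≤ m`. -/
def TempNegligible (f : ℝ → ℝ → ℝ) : Prop :=
  ∀ m : ℕ, ∃ q : ℕ, ∀ p : ℕ, ∃ C : ℝ, 0 < C ∧ ∃ ε₀ ∈ Set.Ioc (0:ℝ) 1,
    ∀ ε ∈ Set.Ioc (0:ℝ) 1, ε ≤ ε₀ →
      ∀ x : ℝ, ∀ k ≤ m, |iteratedDeriv k (f ε) x| ≤ C * (1 + |x|) ^ q * ε ^ p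


open Function Set


lemma invFun_strictDerivAt {φ : ℝ → ℝ} (hφ : ContDiff ℝ (⊤:ℕ∞) φ) (hb : Function.Bijective φ)
    {ξ : ℝ} (hξ : deriv φ ξ ≠ 0) :
    HasStrictDerivAt (Function.invFun φ) (deriv φ ξ)⁻¹ (φ ξ) := by
  have h1 : HasStrictDerivAt φ (deriv φ ξ) ξ :=
    hφ.contDiffAt.hasStrictDerivAt (by simp)
  exact h1.to_local_left_inverse hξ
    (Filter.Eventually.of_forall fun y => Function.leftInverse_invFun hb.injective y)

lemma deriv_ne_zero_of_invFun_bound {φ : ℝ → ℝ} (hφ : ContDiff ℝ (⊤:ℕ∞) φ)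
    (hb : Function.Bijective φ) {M : ℝ → ℝ} (hM : Continuous M)
    (hbound : ∀ y, |deriv (Function.invFun φ) y| ≤ M y) :
    ∀ x, deriv φ x ≠ 0 := by
  intro x₀ h0
  set K : ℝ := M (φ x₀) + 1 with hK
  have hM0 : 0 ≤ M (φ x₀) := le_trans (abs_nonneg _) (hbound (φ x₀))
  have hKpos : 0 < K := by linarith
  have hder : Continuous (deriv φ) := (contDiff_infty_iff_deriv.mp hφ).2.continuous
  have h1 : ∀ᶠ x in nhds x₀, |deriv φ x| < K⁻¹ := by
    have hc : ContinuousAt (fun x => |deriv φ x|) x₀ := (hder.abs).continuousAt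
    have h2 : |deriv φ x₀| < K⁻¹ := by rw [h0, abs_zero]; positivity
    exact hc.eventually_lt_const h2
  have h2 : ∀ᶠ x in nhds x₀, M (φ x) < K := by
    have hc : ContinuousAt (fun x => M (φ x)) x₀ := (hM.comp hφ.continuous).continuousAt
    exact hc.eventually_lt_const (by linarith)
  obtain ⟨δ, hδ, hball⟩ := Metric.eventually_nhds_iff.mp (h1.and h2)
  have hzero : ∀ x ∈ Metric.ball x₀ δ, deriv φ x = 0 := by
    intro x hx
    by_contra hne
    obtain ⟨hlt, hMlt⟩ := hball (Metric.mem_ball.mp hx)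
    have hd : deriv (Function.invFun φ) (φ x) = (deriv φ x)⁻¹ :=
      ((invFun_strictDerivAt hφ hb hne).hasDerivAt).deriv
    have hb1 : |(deriv φ x)⁻¹| ≤ M (φ x) := hd ▸ hbound (φ x)
    have habs : 0 < |deriv φ x| := abs_pos.mpr hne
    rw [abs_inv] at hb1
    have hgt : K⁻¹ < |deriv φ x| :=
      (inv_lt_comm₀ habs hKpos).mp (lt_of_le_of_lt hb1 hMlt)
    linarith
  have hx1 : x₀ ∈ Metric.ball x₀ δ := Metric.mem_ball_self hδ
  have hx2 : x₀ + δ/2 ∈ Metric.ball x₀ δ := by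
    rw [Metric.mem_ball, Real.dist_eq, add_sub_cancel_left, abs_of_pos (by linarith)]; linarith
  have hmv := (convex_ball x₀ δ).norm_image_sub_le_of_norm_deriv_le
    (fun y _ => hφ.differentiable (by simp) y)
    (fun y hy => by rw [Real.norm_eq_abs, hzero y hy, abs_zero]) hx1 hx2
  rw [Real.norm_eq_abs, zero_mul] at hmv
  have heq : φ (x₀ + δ/2) = φ x₀ :=
    sub_eq_zero.mp (abs_eq_zero.mp (le_antisymm hmv (abs_nonneg _)))
  have h3 := hb.injective heq
  linarith [h3]

lemma contDiff_invFun {φ : ℝ → ℝ} (hφ : ContDiff ℝ (⊤:ℕ∞) φ)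
    (hb : Function.Bijective φ) {M : ℝ → ℝ} (hM : Continuous M)
    (hbound : ∀ y, |deriv (Function.invFun φ) y| ≤ M y) :
    ContDiff ℝ (⊤:ℕ∞) (Function.invFun φ) := by
  have hne := deriv_ne_zero_of_invFun_bound hφ hb hM hbound
  rw [contDiff_iff_contDiffAt]
  intro y
  set ξ := Function.invFun φ y with hξdef
  have hy : φ ξ = y := Function.rightInverse_invFun hb.surjective y
  have hcd : ContDiffAt ℝ (⊤:ℕ∞) φ ξ := hφ.contDiffAt
  have hd : HasDerivAt φ (deriv φ ξ) ξ :=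
    (hφ.differentiable (by simp) ξ).hasDerivAt
  have hf' := hd.hasFDerivAt_equiv (hne ξ)
  have hl := hcd.to_localInverse (f' := ContinuousLinearEquiv.unitsEquivAut ℝ
      (Units.mk0 (deriv φ ξ) (hne ξ))) hf' (by simp)
  have hev : ∀ᶠ z in nhds (φ ξ), φ ((hcd.localInverse hf' (by simp)) z) = z := by
    exact (hcd.hasStrictFDerivAt' hf' (by simp)).eventually_right_inverse
  have heq : Function.invFun φ =ᶠ[nhds (φ ξ)] hcd.localInverse hf' (by simp) := by
    filter_upwards [hev] with z hz
    conv_lhs => rw [← hz]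
    exact Function.leftInverse_invFun hb.injective _
  rw [← hy]
  exact hl.congr_of_eventuallyEq heq



lemma iteratedDeriv_sub' {u v : ℝ → ℝ} (hu : ContDiff ℝ (⊤:ℕ∞) u) (hv : ContDiff ℝ (⊤:ℕ∞) v)
    (n : ℕ) (a : ℝ) :
    iteratedDeriv n (fun x => u x - v x) a = iteratedDeriv n u a - iteratedDeriv n v a := by
  have h1 : iteratedDeriv n (u + fun x => -(v x)) a
      = iteratedDeriv n u a + iteratedDeriv n (fun x => -(v x)) a := by
    simp only [iteratedDeriv_eq_iteratedFDeriv]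
    rw [iteratedFDeriv_add_apply (hu.contDiffAt.of_le (by exact_mod_cast le_top))
      ((hv.neg).contDiffAt.of_le (by exact_mod_cast le_top))]
    simp
  have h2 : (fun x => u x - v x) = (u + fun x => -(v x)) := by funext x; simp [sub_eq_add_neg]
  rw [h2, h1, iteratedDeriv_fun_neg]
  ring

lemma pb_mono {X ε : ℝ} (hX : 1 ≤ X) (hε : 0 < ε) (hε1 : ε ≤ 1) {c c' : ℝ} {a a' b b' : ℕ}
    (hc0 : 0 ≤ c) (hc : c ≤ c') (ha : a ≤ a') (hb : b ≤ b') :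
    c * X ^ a / ε ^ b ≤ c' * X ^ a' / ε ^ b' := by
  have hX0 : (0:ℝ) < X := lt_of_lt_of_le one_pos hX
  apply div_le_div₀ (mul_nonneg (hc0.trans hc) (by positivity))
    (mul_le_mul hc (pow_le_pow_right₀ hX ha) (by positivity) (le_trans hc0 hc))
    (by positivity) (pow_le_pow_of_le_one hε.le hε1 hb)

lemma pb_one_le {X ε : ℝ} (hX : 1 ≤ X) (hε : 0 < ε) (hε1 : ε ≤ 1) (a b : ℕ) :
    1 ≤ X ^ a / ε ^ b := by
  rw [le_div_iff₀ (by positivity)]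
  rw [one_mul]
  calc ε ^ b ≤ 1 := pow_le_one₀ hε.le hε1
  _ ≤ X ^ a := one_le_pow₀ hX

lemma pb_pow (c X ε : ℝ) (a b q : ℕ) : (c * X ^ a / ε ^ b) ^ q = c ^ q * X ^ (a*q) / ε ^ (b*q) := by
  rw [div_pow, mul_pow, pow_mul, pow_mul]

lemma interp {u : ℝ → ℝ} (hu : ContDiff ℝ (⊤:ℕ∞) u) {x t A B : ℝ} (ht : 0 < t)
    (hA : ∀ y ∈ Icc x (x+t), |u y| ≤ A)
    (hB : ∀ y ∈ Icc x (x+t), |iteratedDeriv 2 u y| ≤ B) :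
    |deriv u x| ≤ 2*A/t + t*B := by
  have hxt : x < x + t := by linarith
  have hud : Differentiable ℝ u := hu.differentiable (by simp)
  have hdu : ContDiff ℝ (⊤:ℕ∞) (deriv u) := (contDiff_infty_iff_deriv.mp hu).2
  have hdud : Differentiable ℝ (deriv u) := hdu.differentiable (by simp)
  have hB' : ∀ y ∈ Icc x (x+t), |deriv (deriv u) y| ≤ B := by
    intro y hy
    have h := hB y hy
    rwa [show iteratedDeriv 2 u = deriv (deriv u) by
      rw [iteratedDeriv_succ, iteratedDeriv_one]] at h
  obtain ⟨ξ, hξ, hslope⟩ := exists_hasDerivAt_eq_slope u (deriv u) hxt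
    (hud.continuous.continuousOn) (fun y _ => (hud y).hasDerivAt)
  have hxξ : x < ξ := hξ.1
  obtain ⟨η, hη, hslope2⟩ := exists_hasDerivAt_eq_slope (deriv u) (deriv (deriv u)) hxξ
    (hdud.continuous.continuousOn) (fun y _ => (hdud y).hasDerivAt)
  have hne : ξ - x ≠ 0 := by have := hξ.1; intro h; linarith [sub_eq_zero.mp h]
  have key : deriv u x = deriv u ξ - (ξ - x) * deriv (deriv u) η := by
    rw [hslope2, mul_comm, div_mul_cancel₀ _ hne]; ring
  have hAbound : |deriv u ξ| ≤ 2*A/t := by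
    rw [hslope, add_sub_cancel_left, abs_div, abs_of_pos ht]
    have h1 : |u (x+t) - u x| ≤ 2*A := by
      have ha1 := hA (x+t) ⟨by linarith, le_refl _⟩
      have ha2 := hA x ⟨le_refl _, by linarith⟩
      calc |u (x+t) - u x| ≤ |u (x+t)| + |u x| := abs_sub _ _
        _ ≤ 2*A := by linarith
    gcongr
  have hBnn : 0 ≤ B := le_trans (abs_nonneg _) (hB x ⟨le_refl _, by linarith⟩)
  calc |deriv u x| = |deriv u ξ - (ξ - x) * deriv (deriv u) η| := by rw [key]
    _ ≤ |deriv u ξ| + |(ξ - x) * deriv (deriv u) η| := abs_sub _ _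
    _ ≤ 2*A/t + t*B := by
        apply add_le_add hAbound
        rw [abs_mul]
        apply mul_le_mul _ (hB' η ⟨hη.1.le, by linarith [hη.2, hξ.2]⟩) (abs_nonneg _) ht.le
        rw [abs_of_pos (by linarith [hξ.1] : (0:ℝ) < ξ - x)]
        linarith [hξ.2]

/-- If `(f_ε)`, `(g_ε)` are families of smooth bijections of `ℝ` such that the four families
`(f_ε)`, `(g_ε)`, `(f_ε⁻¹)`, `(g_ε⁻¹)` are tempered moderate, and `(g_ε - f_ε)` is tempered
negligible, then `(f_ε⁻¹ - g_ε⁻¹)` is tempered negligible. -/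
theorem inv_diff_tempNegligible (f g : ℝ → ℝ → ℝ)
    (hfsm : ∀ ε ∈ Set.Ioc (0:ℝ) 1, ContDiff ℝ (⊤ : ℕ∞) (f ε))
    (hgsm : ∀ ε ∈ Set.Ioc (0:ℝ) 1, ContDiff ℝ (⊤ : ℕ∞) (g ε))
    (hfbij : ∀ ε ∈ Set.Ioc (0:ℝ) 1, Function.Bijective (f ε))
    (hgbij : ∀ ε ∈ Set.Ioc (0:ℝ) 1, Function.Bijective (g ε))
    (hf : TempModerate f) (hg : TempModerate g)
    (hfi : TempModerate (fun ε => Function.invFun (f ε)))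
    (hgi : TempModerate (fun ε => Function.invFun (g ε)))
    (hfg : TempNegligible (fun ε x => g ε x - f ε x)) :
    TempNegligible (fun ε x => Function.invFun (f ε) x - Function.invFun (g ε) x) := by
  intro m
  obtain ⟨q1, N1, C1, hC1, ε1, hε1, H1⟩ := hgi 1
  obtain ⟨q2, N2, C2, hC2, ε2, hε2, H2⟩ := hf 0
  obtain ⟨q3, H3⟩ := hfg 0
  obtain ⟨q4, N4, C4, hC4, ε4, hε4, H4⟩ := hfi 1
  obtain ⟨q5, N5, C5, hC5, ε5, hε5, H5⟩ := hfi (m+2)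
  obtain ⟨q6, N6, C6, hC6, ε6, hε6, H6⟩ := hgi (m+2)
  set εS : ℝ := min (min ε1 ε2) (min ε4 (min ε5 ε6)) with hεSdef
  have hεS0 : 0 < εS := by
    apply lt_min (lt_min hε1.1 hε2.1) (lt_min hε4.1 (lt_min hε5.1 hε6.1))
  have hεS1 : εS ≤ 1 := le_trans (min_le_left _ _) (le_trans (min_le_left _ _) hε1.2)
  have hεSε1 : εS ≤ ε1 := le_trans (min_le_left _ _) (min_le_left _ _)
  have hεSε2 : εS ≤ ε2 := le_trans (min_le_left _ _) (min_le_right _ _)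
  have hεSε4 : εS ≤ ε4 := le_trans (min_le_right _ _) (min_le_left _ _)
  have hεSε5 : εS ≤ ε5 := le_trans (min_le_right _ _)
    (le_trans (min_le_right _ _) (min_le_left _ _))
  have hεSε6 : εS ≤ ε6 := le_trans (min_le_right _ _)
    (le_trans (min_le_right _ _) (min_le_right _ _))
  -- smoothness of the inverses
  have hsmf : ∀ ε ∈ Set.Ioc (0:ℝ) 1, ε ≤ εS → ContDiff ℝ (⊤:ℕ∞) (Function.invFun (f ε)) := by
    intro ε hε hεle
    apply contDiff_invFun ((hfsm ε hε).of_le (by simp)) (hfbij ε hε)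
      (M := fun y => C4 * (1+|y|)^q4 / ε^N4)
      ((continuous_const.mul ((continuous_const.add continuous_abs).pow q4)).div_const _)
    intro y
    have h := H4 ε hε (le_trans hεle hεSε4) y 1 le_rfl
    beta_reduce at h
    rwa [iteratedDeriv_one] at h
  have hsmg : ∀ ε ∈ Set.Ioc (0:ℝ) 1, ε ≤ εS → ContDiff ℝ (⊤:ℕ∞) (Function.invFun (g ε)) := by
    intro ε hε hεle
    apply contDiff_invFun ((hgsm ε hε).of_le (by simp)) (hgbij ε hε)
      (M := fun y => C1 * (1+|y|)^q1 / ε^N1)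
      ((continuous_const.mul ((continuous_const.add continuous_abs).pow q1)).div_const _)
    intro y
    have h := H1 ε hε (le_trans hεle hεSε1) y 1 le_rfl
    beta_reduce at h
    rwa [iteratedDeriv_one] at h
  -- moderateness of the difference of the inverses
  have hmod : ∀ ε ∈ Set.Ioc (0:ℝ) 1, ε ≤ εS → ∀ x : ℝ, ∀ k ≤ m+2,
      |iteratedDeriv k (fun y => Function.invFun (f ε) y - Function.invFun (g ε) y) x|
        ≤ (C5+C6) * (1+|x|) ^ (max q5 q6) / ε ^ (max N5 N6) := by
    intro ε hε hεle x k hk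
    have hX1 : (1:ℝ) ≤ 1 + |x| := le_add_of_nonneg_right (abs_nonneg x)
    have h5 := H5 ε hε (le_trans hεle hεSε5) x k hk
    have h6 := H6 ε hε (le_trans hεle hεSε6) x k hk
    beta_reduce at h5 h6
    rw [iteratedDeriv_sub' (hsmf ε hε hεle) (hsmg ε hε hεle) k x]
    have e1 : (C5+C6) * (1+|x|) ^ (max q5 q6) / ε ^ (max N5 N6)
        = C5 * (1+|x|) ^ (max q5 q6) / ε ^ (max N5 N6)
          + C6 * (1+|x|) ^ (max q5 q6) / ε ^ (max N5 N6) := by ring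
    have h5' := le_trans h5 (pb_mono hX1 hε.1 hε.2 hC5.le le_rfl (le_max_left q5 q6)
      (le_max_left N5 N6))
    have h6' := le_trans h6 (pb_mono hX1 hε.1 hε.2 hC6.le le_rfl (le_max_right q5 q6)
      (le_max_right N5 N6))
    calc |iteratedDeriv k (Function.invFun (f ε)) x - iteratedDeriv k (Function.invFun (g ε)) x|
        ≤ |iteratedDeriv k (Function.invFun (f ε)) x|
          + |iteratedDeriv k (Function.invFun (g ε)) x| := abs_sub _ _
      _ ≤ (C5+C6) * (1+|x|) ^ (max q5 q6) / ε ^ (max N5 N6) := by rw [e1]; linarith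
  -- main induction
  suffices key : ∀ n : ℕ, n ≤ m → ∃ q : ℕ, ∀ p : ℕ, ∃ C : ℝ, 0 < C ∧ ∃ ε₀ ∈ Set.Ioc (0:ℝ) 1,
      ∀ ε ∈ Set.Ioc (0:ℝ) 1, ε ≤ ε₀ → ∀ x : ℝ, ∀ k ≤ n,
        |iteratedDeriv k (fun y => Function.invFun (f ε) y - Function.invFun (g ε) y) x|
          ≤ C * (1 + |x|) ^ q * ε ^ p by
    obtain ⟨q, hq⟩ := key m le_rfl
    exact ⟨q, hq⟩
  intro n
  induction n with
  | zero =>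
    intro _
    refine ⟨(max 1 (q1*q2)) * q4 + q1 * q3, ?_⟩
    intro p
    obtain ⟨C3, hC3, ε3, hε3, H3p⟩ := H3 (p + ((N1*q2+N2) * q4 + N4 + N1 * q3))
    refine ⟨C4 * (1 + C2*(1+C1)^q2)^q4 * ((1+C1)^q3 * C3), by positivity,
      min εS ε3, ⟨lt_min hεS0 hε3.1, le_trans (min_le_left _ _) hεS1⟩, ?_⟩
    intro ε hε hεle x k hk
    obtain rfl := Nat.le_zero.mp hk
    rw [iteratedDeriv_zero]
    have hε0 : 0 < ε := hε.1
    have hεone : ε ≤ 1 := hε.2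
    have hεS' : ε ≤ εS := le_trans hεle (min_le_left _ _)
    have hε3' : ε ≤ ε3 := le_trans hεle (min_le_right _ _)
    have hX1 : (1:ℝ) ≤ 1 + |x| := le_add_of_nonneg_right (abs_nonneg x)
    set X : ℝ := 1 + |x| with hXdef
    set b : ℝ := Function.invFun (g ε) x with hbdef
    -- bound on |b|
    have hbB : |b| ≤ C1 * X^q1 / ε^N1 := by
      have h := H1 ε hε (le_trans hεS' hεSε1) x 0 (by norm_num)
      beta_reduce at h
      rwa [iteratedDeriv_zero] at h
    have h1b : 1 + |b| ≤ (1+C1) * X^q1 / ε^N1 := by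
      have hone := pb_one_le hX1 hε0 hεone q1 N1
      have e1 : (1+C1) * X^q1 / ε^N1 = X^q1/ε^N1 + C1 * X^q1 / ε^N1 := by ring
      rw [e1]; linarith
    have h1b0 : (0:ℝ) ≤ 1 + |b| := by positivity
    -- bound on |f ε b|
    have hFb : |f ε b| ≤ C2 * (1+C1)^q2 * X^(q1*q2) / ε^(N1*q2+N2) := by
      have h := H2 ε hε (le_trans hεS' hεSε2) b 0 le_rfl
      rw [iteratedDeriv_zero] at h
      calc |f ε b| ≤ C2 * (1+|b|)^q2 / ε^N2 := h
        _ ≤ C2 * ((1+C1) * X^q1 / ε^N1)^q2 / ε^N2 := by gcongr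
        _ = C2 * (1+C1)^q2 * X^(q1*q2) / ε^(N1*q2+N2) := by
            rw [pb_pow, pow_add]; field_simp
    -- bound on points of the interval
    have hW : ∀ y ∈ uIcc (f ε b) x,
        1 + |y| ≤ (1 + C2*(1+C1)^q2) * X^(max 1 (q1*q2)) / ε^(N1*q2+N2) := by
      intro y hy
      have hy' : |y| ≤ |f ε b| + |x| := by
        rcases Set.mem_uIcc.mp hy with ⟨ha1, ha2⟩ | ⟨ha1, ha2⟩
        · exact le_trans (abs_le_max_abs_abs ha1 ha2)
            (max_le (le_add_of_nonneg_right (abs_nonneg _)) (le_add_of_nonneg_left (abs_nonneg _)))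
        · exact le_trans (abs_le_max_abs_abs ha1 ha2)
            (max_le (le_add_of_nonneg_left (abs_nonneg _)) (le_add_of_nonneg_right (abs_nonneg _)))
      have t1 : X ≤ 1 * X^(max 1 (q1*q2)) / ε^(N1*q2+N2) := by
        have := pb_mono hX1 hε0 hεone (c := 1) (c' := 1) (a := 1) (a' := max 1 (q1*q2))
          (b := 0) (b' := N1*q2+N2) zero_le_one le_rfl (le_max_left _ _) (Nat.zero_le _)
        simpa using this
      have t2 : C2 * (1+C1)^q2 * X^(q1*q2) / ε^(N1*q2+N2)
          ≤ C2 * (1+C1)^q2 * X^(max 1 (q1*q2)) / ε^(N1*q2+N2) := by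
        apply pb_mono hX1 hε0 hεone (by positivity) le_rfl (le_max_right _ _) le_rfl
      have e1 : (1 + C2*(1+C1)^q2) * X^(max 1 (q1*q2)) / ε^(N1*q2+N2)
          = 1 * X^(max 1 (q1*q2)) / ε^(N1*q2+N2)
            + C2*(1+C1)^q2 * X^(max 1 (q1*q2)) / ε^(N1*q2+N2) := by ring
      have : 1 + |y| ≤ X + |f ε b| := by
        rw [hXdef]; have := abs_nonneg x; linarith
      rw [e1]; linarith
    -- derivative bound on the interval
    have hK : ∀ y ∈ uIcc (f ε b) x, |deriv (Function.invFun (f ε)) y|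
        ≤ C4 * ((1 + C2*(1+C1)^q2) * X^(max 1 (q1*q2)) / ε^(N1*q2+N2))^q4 / ε^N4 := by
      intro y hy
      have h := H4 ε hε (le_trans hεS' hεSε4) y 1 le_rfl
      beta_reduce at h
      rw [iteratedDeriv_one] at h
      calc |deriv (Function.invFun (f ε)) y| ≤ C4 * (1+|y|)^q4 / ε^N4 := h
        _ ≤ _ := by gcongr <;> exact hW y hy
    -- mean value inequality
    have hsmf' := hsmf ε hε hεS'
    have hmvt := (convex_uIcc (f ε b) x).norm_image_sub_le_of_norm_deriv_le
      (fun y _ => hsmf'.differentiable (by simp) y)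
      (fun y hy => by rw [Real.norm_eq_abs]; exact hK y hy)
      (left_mem_uIcc) (right_mem_uIcc)
    rw [Real.norm_eq_abs, Real.norm_eq_abs] at hmvt
    have hab : Function.invFun (f ε) (f ε b) = b :=
      Function.leftInverse_invFun (hfbij ε hε).injective b
    have hGb : g ε b = x := Function.rightInverse_invFun (hgbij ε hε).surjective x
    -- negligible bound on the difference at b
    have hneg : |x - f ε b| ≤ C3 * ((1+C1) * X^q1/ε^N1)^q3 * ε^(p + ((N1*q2+N2)*q4 + N4 + N1*q3)) := by
      have h := H3p ε hε hε3' b 0 le_rfl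
      rw [iteratedDeriv_zero] at h
      beta_reduce at h
      have e2 : x - f ε b = g ε b - f ε b := by rw [hGb]
      rw [e2]
      calc |g ε b - f ε b| ≤ C3 * (1+|b|)^q3 * ε^(p + ((N1*q2+N2)*q4 + N4 + N1*q3)) := h
        _ ≤ _ := by gcongr
    -- put everything together
    have hKnn : (0:ℝ) ≤ C4 * ((1 + C2*(1+C1)^q2) * X^(max 1 (q1*q2)) / ε^(N1*q2+N2))^q4 / ε^N4 := by
      positivity
    calc |Function.invFun (f ε) x - Function.invFun (g ε) x|
        = |Function.invFun (f ε) x - Function.invFun (f ε) (f ε b)| := by rw [hab]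
      _ ≤ C4 * ((1 + C2*(1+C1)^q2) * X^(max 1 (q1*q2)) / ε^(N1*q2+N2))^q4 / ε^N4
          * |x - f ε b| := hmvt
      _ ≤ C4 * ((1 + C2*(1+C1)^q2) * X^(max 1 (q1*q2)) / ε^(N1*q2+N2))^q4 / ε^N4
          * (C3 * ((1+C1) * X^q1/ε^N1)^q3 * ε^(p + ((N1*q2+N2)*q4 + N4 + N1*q3))) := by
          exact mul_le_mul_of_nonneg_left hneg hKnn
      _ = C4 * (1 + C2*(1+C1)^q2)^q4 * ((1+C1)^q3 * C3)
          * X ^ ((max 1 (q1*q2)) * q4 + q1 * q3) * ε^p := by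
          rw [pb_pow, pb_pow]
          have e3 : ε^(p + ((N1*q2+N2)*q4 + N4 + N1*q3))
              = ε^p * (ε^((N1*q2+N2)*q4) * ε^N4 * ε^(N1*q3)) := by
            rw [← pow_add, ← pow_add, ← pow_add]
          rw [e3, pow_add]
          field_simp
  | succ n IH =>
    intro hn1
    obtain ⟨q, hq⟩ := IH (Nat.le_of_succ_le hn1)
    refine ⟨max q (max q5 q6), ?_⟩
    intro p
    obtain ⟨C, hC, ε₀', hε₀', Hp⟩ := hq (2*p + max N5 N6)
    refine ⟨2*C*2^q + (C5+C6)*2^(max q5 q6), by positivity, min ε₀' εS,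
      ⟨lt_min hε₀'.1 hεS0, le_trans (min_le_left _ _) hε₀'.2⟩, ?_⟩
    intro ε hε hεle x k hk
    have hε0 : 0 < ε := hε.1
    have hεone : ε ≤ 1 := hε.2
    have hεS' : ε ≤ εS := le_trans hεle (min_le_right _ _)
    have hε₀'' : ε ≤ ε₀' := le_trans hεle (min_le_left _ _)
    have hX1 : (1:ℝ) ≤ 1 + |x| := le_add_of_nonneg_right (abs_nonneg x)
    set X : ℝ := 1 + |x| with hXdef
    have hCle : C ≤ 2*C*2^q + (C5+C6)*2^(max q5 q6) := by
      have h1 : (1:ℝ) ≤ 2^q := one_le_pow₀ one_le_two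
      nlinarith [hC5.le, hC6.le, pow_pos (zero_lt_two (α := ℝ)) (max q5 q6)]
    by_cases hk2 : k ≤ n
    · -- reuse induction hypothesis
      have h := Hp ε hε hε₀'' x k hk2
      calc |iteratedDeriv k (fun y => Function.invFun (f ε) y - Function.invFun (g ε) y) x|
          ≤ C * X^q * ε^(2*p + max N5 N6) := h
        _ ≤ (2*C*2^q + (C5+C6)*2^(max q5 q6)) * X^(max q (max q5 q6)) * ε^p := by
            apply mul_le_mul
            · apply mul_le_mul hCle (pow_le_pow_right₀ hX1 (le_max_left _ _)) (by positivity)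
                (le_trans hC.le hCle)
            · exact pow_le_pow_of_le_one hε0.le hεone (by omega)
            · positivity
            · positivity
    · -- k = n + 1 : interpolation
      have hkeq : k = n + 1 := by omega
      subst hkeq
      set t : ℝ := ε^(p + max N5 N6) with htdef
      have ht : 0 < t := by positivity
      have ht1 : t ≤ 1 := pow_le_one₀ hε0.le hεone
      have hsm : ContDiff ℝ (⊤:ℕ∞) (fun y => Function.invFun (f ε) y - Function.invFun (g ε) y) :=
        (hsmf ε hε hεS').sub (hsmg ε hε hεS')
      set u : ℝ → ℝ := iteratedDeriv n (fun y => Function.invFun (f ε) y - Function.invFun (g ε) y)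
        with hudef
      have hu : ContDiff ℝ (⊤:ℕ∞) u := by
        rw [hudef, iteratedDeriv_eq_iterate]
        exact ContDiff.iterate_deriv n hsm
      have hA : ∀ y ∈ Icc x (x+t), |u y| ≤ C * 2^q * X^q * ε^(2*p + max N5 N6) := by
        intro y hy
        have hyb : |y| ≤ |x| + t := by
          refine abs_le.mpr ⟨?_, ?_⟩
          · have := hy.1; have := neg_abs_le x; linarith
          · have := hy.2; have := le_abs_self x; linarith
        have h1y : 1 + |y| ≤ 2 * X := by rw [hXdef]; linarith
        have h := Hp ε hε hε₀'' y n le_rfl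
        calc |u y| ≤ C * (1+|y|)^q * ε^(2*p + max N5 N6) := h
          _ ≤ C * (2*X)^q * ε^(2*p + max N5 N6) := by gcongr
          _ = C * 2^q * X^q * ε^(2*p + max N5 N6) := by rw [mul_pow]; ring
      have hB : ∀ y ∈ Icc x (x+t), |iteratedDeriv 2 u y|
          ≤ (C5+C6) * 2^(max q5 q6) * X^(max q5 q6) / ε^(max N5 N6) := by
        intro y hy
        have hyb : |y| ≤ |x| + t := by
          refine abs_le.mpr ⟨?_, ?_⟩
          · have := hy.1; have := neg_abs_le x; linarith
          · have := hy.2; have := le_abs_self x; linarith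
        have h1y : 1 + |y| ≤ 2 * X := by rw [hXdef]; linarith
        have e1 : iteratedDeriv 2 u y = iteratedDeriv (n+2)
            (fun y => Function.invFun (f ε) y - Function.invFun (g ε) y) y := by
          rw [hudef, show (2:ℕ) = 1 + 1 from rfl, iteratedDeriv_succ, iteratedDeriv_one,
            iteratedDeriv_succ, iteratedDeriv_succ]
        rw [e1]
        have h := hmod ε hε hεS' y (n+2) (by omega)
        calc |iteratedDeriv (n+2) (fun y => Function.invFun (f ε) y - Function.invFun (g ε) y) y|
            ≤ (C5+C6) * (1+|y|)^(max q5 q6) / ε^(max N5 N6) := h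
          _ ≤ (C5+C6) * (2*X)^(max q5 q6) / ε^(max N5 N6) := by gcongr
          _ = (C5+C6) * 2^(max q5 q6) * X^(max q5 q6) / ε^(max N5 N6) := by
              rw [mul_pow]; ring
      have hint := interp hu ht hA hB
      have e2 : deriv u x = iteratedDeriv (n+1)
          (fun y => Function.invFun (f ε) y - Function.invFun (g ε) y) x := by
        rw [hudef, iteratedDeriv_succ]
      rw [e2] at hint
      refine le_trans hint ?_
      have e3 : 2*(C * 2^q * X^q * ε^(2*p + max N5 N6))/t
          + t*((C5+C6) * 2^(max q5 q6) * X^(max q5 q6) / ε^(max N5 N6))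
          = 2*C*2^q * X^q * ε^p + (C5+C6) * 2^(max q5 q6) * X^(max q5 q6) * ε^p := by
        rw [htdef]
        have e4 : ε^(2*p + max N5 N6) = ε^p * ε^(p + max N5 N6) := by
          rw [← pow_add]; congr 1; omega
        have e5 : ε^(p + max N5 N6) = ε^p * ε^(max N5 N6) := by rw [← pow_add]
        rw [e4, e5]
        field_simp
      rw [e3]
      have t1 : 2*C*2^q * X^q * ε^p ≤ 2*C*2^q * X^(max q (max q5 q6)) * ε^p := by
        have hx := pow_le_pow_right₀ hX1 (le_max_left q (max q5 q6))
        exact mul_le_mul_of_nonneg_right (mul_le_mul_of_nonneg_left hx (by positivity))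
          (by positivity)
      have t2 : (C5+C6) * 2^(max q5 q6) * X^(max q5 q6) * ε^p
          ≤ (C5+C6) * 2^(max q5 q6) * X^(max q (max q5 q6)) * ε^p := by
        have hx := pow_le_pow_right₀ hX1 (le_max_right q (max q5 q6))
        exact mul_le_mul_of_nonneg_right (mul_le_mul_of_nonneg_left hx (by positivity))
          (by positivity)
      have e6 : (2*C*2^q + (C5+C6)*2^(max q5 q6)) * X^(max q (max q5 q6)) * ε^p
          = 2*C*2^q * X^(max q (max q5 q6)) * ε^p
            + (C5+C6)*2^(max q5 q6) * X^(max q (max q5 q6)) * ε^p := by ring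
      rw [e6]
      linarith
end

section
/- Let (f_ε)_{ε∈(0,1]} be a family of smooth functions ℝ→ℝ that is c-bounded and locally moderate. If (u_ε)_{ε∈(0,1]} is a locally moderate family of smooth functions on ℝ², then the family of smooth functions v_ε : ℝ→ℝ defined by v_ε(x) = u_ε(x, f_ε(x)) is locally moderate. -/
/- auxiliary lemmas -/
-- iterated derivatives of a continuous linear map, order ≥ 1, have norm ≤ ‖e‖
lemma clm_norm_iteratedFDeriv_le (e : ℝ →L[ℝ] ℝ × ℝ) {i : ℕ} (hi : 1 ≤ i) (x : ℝ) :
    ‖iteratedFDeriv ℝ i (⇑e) x‖ ≤ ‖e‖ := by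
  obtain ⟨j, rfl⟩ := Nat.exists_eq_add_of_le hi
  rw [add_comm, ← norm_iteratedFDeriv_fderiv]
  have h : fderiv ℝ (⇑e) = fun _ : ℝ => e := funext fun y => e.fderiv
  rw [h]
  cases j with
  | zero => simp [norm_iteratedFDeriv_zero]
  | succ m => simp [iteratedFDeriv_succ_const]

lemma pair_norm_iteratedFDeriv_le {g : ℝ → ℝ} (hg : ContDiff ℝ (⊤ : ℕ∞) g) {i : ℕ} (hi : 1 ≤ i) (x : ℝ) :
    ‖iteratedFDeriv ℝ i (fun y => ((y, g y) : ℝ × ℝ)) x‖ ≤ 1 + ‖iteratedFDeriv ℝ i g x‖ := by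
  set e₁ : ℝ →L[ℝ] ℝ × ℝ := ContinuousLinearMap.inl ℝ ℝ ℝ
  set e₂ : ℝ →L[ℝ] ℝ × ℝ := ContinuousLinearMap.inr ℝ ℝ ℝ
  have he₁ : ‖e₁‖ ≤ 1 :=
    ContinuousLinearMap.opNorm_le_bound _ zero_le_one fun y => by
      simp [e₁, Prod.norm_def]
  have he₂ : ‖e₂‖ ≤ 1 :=
    ContinuousLinearMap.opNorm_le_bound _ zero_le_one fun y => by
      simp [e₂, Prod.norm_def]
  have heq : (fun y => ((y, g y) : ℝ × ℝ)) = (⇑e₁ + ⇑e₂ ∘ g) := by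
    funext y
    simp [e₁, e₂, Prod.ext_iff]
  rw [heq, iteratedFDeriv_add_apply (e₁.contDiff.of_le le_top).contDiffAt
    (((e₂.contDiff.comp hg).of_le (by exact_mod_cast le_top))).contDiffAt]
  refine (norm_add_le _ _).trans (add_le_add ?_ ?_)
  · exact (clm_norm_iteratedFDeriv_le e₁ hi x).trans he₁
  · rw [e₂.iteratedFDeriv_comp_left hg.contDiffAt (x := x) (by exact_mod_cast le_top)]
    calc ‖e₂.compContinuousMultilinearMap (iteratedFDeriv ℝ i g x)‖
        ≤ ‖e₂‖ * ‖iteratedFDeriv ℝ i g x‖ :=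
          ContinuousLinearMap.norm_compContinuousMultilinearMap_le _ _
      _ ≤ 1 * ‖iteratedFDeriv ℝ i g x‖ := by
          gcongr
      _ = ‖iteratedFDeriv ℝ i g x‖ := one_mul _


/-- A family `(u_ε)_{ε∈(0,1]}` of smooth functions on `ℝ²` is locally moderate: for every
compact `K` and derivative order `l` there are `N ∈ ℕ`, `C > 0`, `ε₀ ∈ (0,1]` with
`sup_{x∈K, |α|≤l} |D^α u_ε(x)| ≤ C ε^{-N}` for all `ε ≤ ε₀`. -/
def LocModerate2 (u : ℝ → ℝ × ℝ → ℝ) : Prop :=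
  ∀ K : Set (ℝ × ℝ), IsCompact K → ∀ l : ℕ, ∃ N : ℕ, ∃ C : ℝ, 0 < C ∧
    ∃ ε₀ ∈ Set.Ioc (0:ℝ) 1, ∀ ε ∈ Set.Ioc (0:ℝ) 1, ε ≤ ε₀ →
      ∀ x ∈ K, ∀ k ≤ l, ‖iteratedFDeriv ℝ k (u ε) x‖ ≤ C / ε ^ N

/-- A family `(f_ε)_{ε∈(0,1]}` of smooth functions on `ℝ` is locally moderate. -/
def LocModerate1 (f : ℝ → ℝ → ℝ) : Prop :=
  ∀ K : Set ℝ, IsCompact K → ∀ l : ℕ, ∃ N : ℕ, ∃ C : ℝ, 0 < C ∧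
    ∃ ε₀ ∈ Set.Ioc (0:ℝ) 1, ∀ ε ∈ Set.Ioc (0:ℝ) 1, ε ≤ ε₀ →
      ∀ x ∈ K, ∀ k ≤ l, |iteratedDeriv k (f ε) x| ≤ C / ε ^ N

/-- A family `(f_ε)_{ε∈(0,1]}` of functions `ℝ → ℝ` is c-bounded: for every compact `K ⊆ ℝ`
there is a compact `L ⊆ ℝ` with `f_ε(K) ⊆ L` for all `ε ∈ (0,1]`. -/
def CBounded (f : ℝ → ℝ → ℝ) : Prop :=
  ∀ K : Set ℝ, IsCompact K → ∃ L : Set ℝ, IsCompact L ∧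
    ∀ ε ∈ Set.Ioc (0:ℝ) 1, f ε '' K ⊆ L

/-- Restriction of a locally moderate family on `ℝ²` to the curves `y = f_ε(x)` of a
c-bounded, locally moderate family is locally moderate. -/
theorem restriction_locModerate (f : ℝ → ℝ → ℝ) (u : ℝ → ℝ × ℝ → ℝ)
    (hfsm : ∀ ε ∈ Set.Ioc (0:ℝ) 1, ContDiff ℝ (⊤ : ℕ∞) (f ε))
    (husm : ∀ ε ∈ Set.Ioc (0:ℝ) 1, ContDiff ℝ (⊤ : ℕ∞) (u ε))
    (hfcb : CBounded f) (hfmod : LocModerate1 f) (humod : LocModerate2 u) :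
    LocModerate1 (fun ε x => u ε (x, f ε x)) := by
  intro K hK l
  obtain ⟨L, hL, hsub⟩ := hfcb K hK
  obtain ⟨N₁, C₁, hC₁, ε₁, hε₁, hu⟩ := humod (K ×ˢ L) (hK.prod hL) l
  obtain ⟨N₂, C₂, hC₂, ε₂, hε₂, hf⟩ := hfmod K hK l
  refine ⟨N₁ + l * N₂, l.factorial * C₁ * (1 + C₂) ^ l, by positivity, min ε₁ ε₂,
    ⟨lt_min hε₁.1 hε₂.1, (min_le_left _ _).trans hε₁.2⟩, ?_⟩
  intro ε hε hεle x hx k hk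
  have hεpos : 0 < ε := hε.1
  have hε1 : ε ≤ 1 := hε.2
  have hεN₂ : 0 < ε ^ N₂ := pow_pos hεpos _
  have hεN₂1 : ε ^ N₂ ≤ 1 := pow_le_one₀ hεpos.le hε1
  have hεN₁ : 0 < ε ^ N₁ := pow_pos hεpos _
  have hgx : (x, f ε x) ∈ K ×ˢ L := ⟨hx, hsub ε hε ⟨x, hx, rfl⟩⟩
  set D : ℝ := (1 + C₂) / ε ^ N₂ with hDdef
  have hD1 : (1 : ℝ) ≤ D := by
    rw [le_div_iff₀ hεN₂]; nlinarith
  have hC' : ∀ i ≤ k, ‖iteratedFDeriv ℝ i (u ε) ((x, f ε x))‖ ≤ C₁ / ε ^ N₁ :=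
    fun i hi => hu ε hε (hεle.trans (min_le_left _ _)) _ hgx i (hi.trans hk)
  have hD' : ∀ i, 1 ≤ i → i ≤ k →
      ‖iteratedFDeriv ℝ i (fun y => ((y, f ε y) : ℝ × ℝ)) x‖ ≤ D ^ i := by
    intro i h1 hik
    have hfb : ‖iteratedFDeriv ℝ i (f ε) x‖ ≤ C₂ / ε ^ N₂ := by
      rw [norm_iteratedFDeriv_eq_norm_iteratedDeriv, Real.norm_eq_abs]
      exact hf ε hε (hεle.trans (min_le_right _ _)) x hx i (hik.trans hk)
    have h2 := pair_norm_iteratedFDeriv_le (hfsm ε hε) h1 x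
    calc ‖iteratedFDeriv ℝ i (fun y => ((y, f ε y) : ℝ × ℝ)) x‖
        ≤ 1 + C₂ / ε ^ N₂ := h2.trans (by linarith)
      _ ≤ D := by
          rw [hDdef, le_div_iff₀ hεN₂]
          have : 0 ≤ C₂ / ε ^ N₂ := by positivity
          rw [add_mul, div_mul_cancel₀ _ hεN₂.ne']
          nlinarith
      _ ≤ D ^ i := le_self_pow₀ hD1 (by omega)
  have key := norm_iteratedFDeriv_comp_le (husm ε hε)
    (contDiff_id.prodMk (hfsm ε hε)) (by exact_mod_cast le_top) x hC' hD'
  have hgoal : |iteratedDeriv k ((fun ε x => u ε (x, f ε x)) ε) x|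
      = ‖iteratedFDeriv ℝ k (u ε ∘ fun y => ((y, f ε y) : ℝ × ℝ)) x‖ := by
    rw [← Real.norm_eq_abs, ← norm_iteratedFDeriv_eq_norm_iteratedDeriv]
    rfl
  rw [hgoal]
  refine key.trans ?_
  have hfac : (k.factorial : ℝ) ≤ l.factorial := by
    exact_mod_cast Nat.factorial_le hk
  have hDk : D ^ k ≤ D ^ l := pow_le_pow_right₀ hD1 hk
  have heq : (l.factorial : ℝ) * (C₁ / ε ^ N₁) * D ^ l
      = l.factorial * C₁ * (1 + C₂) ^ l / ε ^ (N₁ + l * N₂) := by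
    rw [hDdef, div_pow, ← pow_mul, pow_add, mul_comm N₂ l]
    field_simp
  calc (k.factorial : ℝ) * (C₁ / ε ^ N₁) * D ^ k
      ≤ (l.factorial : ℝ) * (C₁ / ε ^ N₁) * D ^ l := by
        have h0 : (0:ℝ) ≤ C₁ / ε ^ N₁ := by positivity
        have h1 : (0:ℝ) ≤ D ^ k := by positivity
        gcongr
    _ = _ := heq
end

section
/- Let (f_ε)_{ε∈(0,1]} be a family of smooth functions ℝ→ℝ that is c-bounded and locally moderate. If (i_ε)_{ε∈(0,1]} is a locally negligible family of smooth functions on ℝ², then the family of smooth functions j_ε : ℝ→ℝ defined by j_ε(x) = i_ε(x, f_ε(x)) is locally negligible. -/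
/-- A family `(u_ε)_{ε∈(0,1]}` of smooth functions on `ℝ²` is locally negligible: for every
compact `K`, derivative order `l` and `p ∈ ℕ` there are `C > 0`, `ε₀ ∈ (0,1]` with
`sup_{x∈K, |α|≤l} |D^α u_ε(x)| ≤ C ε^p` for all `ε ≤ ε₀`. -/
def LocNegligible2 (u : ℝ → ℝ × ℝ → ℝ) : Prop :=
  ∀ K : Set (ℝ × ℝ), IsCompact K → ∀ l : ℕ, ∀ p : ℕ, ∃ C : ℝ, 0 < C ∧
    ∃ ε₀ ∈ Set.Ioc (0:ℝ) 1, ∀ ε ∈ Set.Ioc (0:ℝ) 1, ε ≤ ε₀ →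
      ∀ x ∈ K, ∀ k ≤ l, ‖iteratedFDeriv ℝ k (u ε) x‖ ≤ C * ε ^ p

/-- A family `(f_ε)_{ε∈(0,1]}` of smooth functions on `ℝ` is locally negligible. -/
def LocNegligible1 (f : ℝ → ℝ → ℝ) : Prop :=
  ∀ K : Set ℝ, IsCompact K → ∀ l : ℕ, ∀ p : ℕ, ∃ C : ℝ, 0 < C ∧
    ∃ ε₀ ∈ Set.Ioc (0:ℝ) 1, ∀ ε ∈ Set.Ioc (0:ℝ) 1, ε ≤ ε₀ →
      ∀ x ∈ K, ∀ k ≤ l, |iteratedDeriv k (f ε) x| ≤ C * ε ^ p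

lemma iteratedFDeriv_prod_apply {f g : ℝ → ℝ} {k : ℕ} (hf : ContDiff ℝ k f)
    (hg : ContDiff ℝ k g) (x : ℝ) :
    iteratedFDeriv ℝ k (fun y => (f y, g y)) x
      = (iteratedFDeriv ℝ k f x).prod (iteratedFDeriv ℝ k g x) := by
  simp_rw [← iteratedFDerivWithin_univ]
  exact Eq.symm <| (((hf.contDiffOn).ftaylorSeriesWithin uniqueDiffOn_univ).prodMk
    ((hg.contDiffOn).ftaylorSeriesWithin uniqueDiffOn_univ)).eq_iteratedFDerivWithin_of_uniqueDiffOn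
      le_rfl uniqueDiffOn_univ (Set.mem_univ x)

lemma iteratedDeriv_zero_fun : ∀ m : ℕ, iteratedDeriv m (fun _ : ℝ => (0:ℝ)) = fun _ => 0
  | 0 => by simp
  | (m+1) => by rw [iteratedDeriv_succ', deriv_const']; exact iteratedDeriv_zero_fun m

lemma norm_iteratedFDeriv_id_le {k : ℕ} (hk : 1 ≤ k) (x : ℝ) :
    ‖iteratedFDeriv ℝ k (id : ℝ → ℝ) x‖ ≤ 1 := by
  rw [norm_iteratedFDeriv_eq_norm_iteratedDeriv]
  match k, hk with
  | 1, _ => simp [iteratedDeriv_succ]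
  | (m+2), _ =>
    rw [iteratedDeriv_succ', show deriv (id : ℝ → ℝ) = fun _ => (1:ℝ) from funext fun y => deriv_id y]
    rw [show iteratedDeriv (m+1) (fun _ => (1:ℝ)) = fun _ => 0 from ?_]
    · simp
    · rw [iteratedDeriv_succ']
      simp only [deriv_const']
      exact iteratedDeriv_zero_fun m


/-- Restriction of a locally negligible family on `ℝ²` to the curves `y = f_ε(x)` of a
c-bounded, locally moderate family is locally negligible. -/
theorem restriction_locNegligible (f : ℝ → ℝ → ℝ) (i : ℝ → ℝ × ℝ → ℝ)
    (hfsm : ∀ ε ∈ Set.Ioc (0:ℝ) 1, ContDiff ℝ (⊤ : ℕ∞) (f ε))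
    (hism : ∀ ε ∈ Set.Ioc (0:ℝ) 1, ContDiff ℝ (⊤ : ℕ∞) (i ε))
    (hfcb : CBounded f) (hfmod : LocModerate1 f) (hineg : LocNegligible2 i) :
    LocNegligible1 (fun ε x => i ε (x, f ε x)) := by
  intro K hK l p
  obtain ⟨L, hL, hLsub⟩ := hfcb K hK
  obtain ⟨N, C₂, hC₂, ε₁, hε₁, hf2⟩ := hfmod K hK l
  obtain ⟨C₁, hC₁, ε₂, hε₂, hi2⟩ := hineg (K ×ˢ L) (hK.prod hL) l (p + l * N)
  refine ⟨(l.factorial : ℝ) * C₁ * (C₂ + 1) ^ l, by positivity,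
    min ε₁ ε₂, ⟨⟨lt_min hε₁.1 hε₂.1, (min_le_left _ _).trans hε₁.2⟩, ?_⟩⟩
  intro ε hε hεle x hx k hk
  have hε1' : ε ≤ ε₁ := hεle.trans (min_le_left _ _)
  have hε2' : ε ≤ ε₂ := hεle.trans (min_le_right _ _)
  have hεpos : (0:ℝ) < ε := hε.1
  have hεN : (0:ℝ) < ε ^ N := pow_pos hεpos N
  -- the curve map
  set F : ℝ → ℝ × ℝ := fun y => (y, f ε y) with hF
  have hFsm : ContDiff ℝ (⊤ : ℕ∞) F := contDiff_id.prodMk (hfsm ε hε)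
  set D : ℝ := C₂ / ε ^ N + 1 with hD
  have hD1 : (1:ℝ) ≤ D := le_add_of_nonneg_left (by positivity)
  have hDpos : (0:ℝ) < D := lt_of_lt_of_le one_pos hD1
  -- derivative bounds on F
  have hFbound : ∀ m, 1 ≤ m → m ≤ k → ‖iteratedFDeriv ℝ m F x‖ ≤ D ^ m := by
    intro m hm1 hmk
    have heq : iteratedFDeriv ℝ m F x
        = (iteratedFDeriv ℝ m (id : ℝ → ℝ) x).prod (iteratedFDeriv ℝ m (f ε) x) :=
      iteratedFDeriv_prod_apply (contDiff_id.of_le le_top) ((hfsm ε hε).of_le (by exact_mod_cast le_top)) x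
    rw [heq, ContinuousMultilinearMap.opNorm_prod]
    have h1 : ‖iteratedFDeriv ℝ m (id : ℝ → ℝ) x‖ ≤ D :=
      (norm_iteratedFDeriv_id_le hm1 x).trans hD1
    have h2 : ‖iteratedFDeriv ℝ m (f ε) x‖ ≤ D := by
      rw [norm_iteratedFDeriv_eq_norm_iteratedDeriv, Real.norm_eq_abs]
      exact (hf2 ε hε hε1' x hx m (hmk.trans hk)).trans (le_add_of_nonneg_right zero_le_one)
    calc max ‖iteratedFDeriv ℝ m (id : ℝ → ℝ) x‖ ‖iteratedFDeriv ℝ m (f ε) x‖ ≤ D :=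
          max_le h1 h2
      _ ≤ D ^ m := le_self_pow₀ hD1 (Nat.one_le_iff_ne_zero.mp hm1)
  -- bounds on i ε at F x
  have hFx : F x ∈ K ×ˢ L := ⟨hx, hLsub ε hε ⟨x, hx, rfl⟩⟩
  have hibound : ∀ m, m ≤ k → ‖iteratedFDeriv ℝ m (i ε) (F x)‖ ≤ C₁ * ε ^ (p + l * N) :=
    fun m hm => hi2 ε hε hε2' (F x) hFx m (hm.trans hk)
  -- compose
  have hcomp : ‖iteratedFDeriv ℝ k (i ε ∘ F) x‖
      ≤ (k.factorial : ℝ) * (C₁ * ε ^ (p + l * N)) * D ^ k :=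
    norm_iteratedFDeriv_comp_le (hism ε hε) hFsm (by exact_mod_cast le_top) x hibound hFbound
  have hgoal : |iteratedDeriv k (fun y => i ε (y, f ε y)) x|
      = ‖iteratedFDeriv ℝ k (i ε ∘ F) x‖ := by
    rw [norm_iteratedFDeriv_eq_norm_iteratedDeriv, Real.norm_eq_abs]
    rfl
  rw [hgoal]
  refine hcomp.trans ?_
  -- numeric estimate
  have hDl : D ^ k ≤ ((C₂ + 1) / ε ^ N) ^ l := by
    have hDle : D ≤ (C₂ + 1) / ε ^ N := by
      rw [hD, add_div]
      gcongr
      rw [le_div_iff₀ hεN, one_mul]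
      exact pow_le_one₀ hεpos.le hε.2
    calc D ^ k ≤ D ^ l := pow_le_pow_right₀ hD1 hk
      _ ≤ ((C₂ + 1) / ε ^ N) ^ l := pow_le_pow_left₀ hDpos.le hDle l
  have hfact : (k.factorial : ℝ) ≤ (l.factorial : ℝ) := by
    exact_mod_cast Nat.factorial_le hk
  have hεsplit : ε ^ (p + l * N) = ε ^ p * (ε ^ N) ^ l := by
    rw [← pow_mul, ← pow_add]; ring_nf
  calc (k.factorial : ℝ) * (C₁ * ε ^ (p + l * N)) * D ^ k
      ≤ (l.factorial : ℝ) * (C₁ * ε ^ (p + l * N)) * ((C₂ + 1) / ε ^ N) ^ l := by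
        gcongr
      _ = (l.factorial : ℝ) * C₁ * (C₂ + 1) ^ l * ε ^ p := by
        rw [hεsplit, div_pow]; field_simp
      _ ≤ (l.factorial : ℝ) * C₁ * (C₂ + 1) ^ l * ε ^ p := le_rfl
end

section
/- Let φ, ψ : ℝ→ℝ be smooth. For ε ∈ (0,1] define χ_ε : (−1,1)→ℝ by χ_ε(t) = ∫₀^t ψ(ε·artanh(s)) ds and u_ε : ℝ×(−1,1)→ℝ by u_ε(x,y) = φ(x) + χ_ε(y) − χ_ε(tanh(x/ε)). Then for every smooth compactly supported test function θ on ℝ×(−1,1), lim_{ε→0⁺} ∬ u_ε(x,y) θ(x,y) dx dy = ∬ (φ(x) + ψ(0)·y − ψ(0)·sgn(x)) θ(x,y) dx dy, where sgn(x) is the sign function. In other words, the regularized solutions of the characteristic problem ∂²u/∂x∂y = 0 with data on the curve y = sgn(x) obtained from the deformation y = tanh(x/ε) converge in the sense of distributions to φ(x) + ψ(0)y − ψ(0)sgn(x). -/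
open MeasureTheory intervalIntegral Filter

/-- The inverse hyperbolic tangent, mapping `(-1,1)` onto `ℝ`. -/
noncomputable def artanh (s : ℝ) : ℝ := (1 / 2) * Real.log ((1 + s) / (1 - s))

lemma tanh_eq' (t : ℝ) : Real.tanh t = (1 - Real.exp (-t) ^ 2) / (1 + Real.exp (-t) ^ 2) := by
  have he : Real.exp t ≠ 0 := Real.exp_ne_zero t
  have hd : (0:ℝ) < 1 + Real.exp (-t) ^ 2 := by positivity
  rw [Real.tanh_eq_sinh_div_cosh, Real.sinh_eq, Real.cosh_eq, Real.exp_neg]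
  have hc : (0:ℝ) < Real.exp t + (Real.exp t)⁻¹ := by positivity
  field_simp

lemma tanh_lt_one (t : ℝ) : Real.tanh t < 1 := by
  rw [tanh_eq']
  have hq : (0:ℝ) < Real.exp (-t) ^ 2 := by positivity
  rw [div_lt_one (by positivity)]
  linarith

lemma neg_one_lt_tanh (t : ℝ) : -1 < Real.tanh t := by
  rw [tanh_eq']
  have hq : (0:ℝ) < Real.exp (-t) ^ 2 := by positivity
  rw [lt_div_iff₀ (by positivity)]
  linarith

lemma tanh_nonneg {t : ℝ} (ht : 0 ≤ t) : 0 ≤ Real.tanh t := by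
  rw [tanh_eq']
  have hq : Real.exp (-t) ≤ 1 := Real.exp_le_one_iff.2 (by linarith)
  have hq0 : (0:ℝ) < Real.exp (-t) := Real.exp_pos _
  have : Real.exp (-t) ^ 2 ≤ 1 := by nlinarith
  apply div_nonneg <;> nlinarith

lemma artanh_tanh (t : ℝ) : artanh (Real.tanh t) = t := by
  have hq0 : (0:ℝ) < Real.exp (-t) ^ 2 := by positivity
  unfold artanh
  rw [tanh_eq']
  have h1 : (1 + (1 - Real.exp (-t) ^ 2) / (1 + Real.exp (-t) ^ 2)) /
      (1 - (1 - Real.exp (-t) ^ 2) / (1 + Real.exp (-t) ^ 2)) = (Real.exp (-t) ^ 2)⁻¹ := by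
    have hd : (0:ℝ) < 1 + Real.exp (-t) ^ 2 := by positivity
    have hd2 : (1:ℝ) - (1 - Real.exp (-t) ^ 2) / (1 + Real.exp (-t) ^ 2)
        = 2 * Real.exp (-t) ^ 2 / (1 + Real.exp (-t) ^ 2) := by field_simp; ring
    have hd1 : (1:ℝ) + (1 - Real.exp (-t) ^ 2) / (1 + Real.exp (-t) ^ 2)
        = 2 / (1 + Real.exp (-t) ^ 2) := by field_simp; ring
    rw [hd1, hd2]
    rw [div_div_div_eq]
    field_simp
  rw [h1, Real.log_inv, ← Real.exp_nat_mul, Real.log_exp]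
  push_cast
  ring

lemma tendsto_tanh_atTop : Filter.Tendsto Real.tanh Filter.atTop (nhds 1) := by
  have h : Filter.Tendsto (fun t : ℝ => Real.exp (-t) ^ 2) Filter.atTop (nhds 0) := by
    have := Real.tendsto_exp_neg_atTop_nhds_zero
    simpa using this.pow 2
  have : Filter.Tendsto (fun t : ℝ => (1 - Real.exp (-t) ^ 2) / (1 + Real.exp (-t) ^ 2))
      Filter.atTop (nhds ((1 - 0) / (1 + 0))) :=
    Filter.Tendsto.div (by simpa using (tendsto_const_nhds.sub h)) (by simpa using (tendsto_const_nhds.add h)) (by norm_num)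
  simp only [sub_zero, add_zero, div_one] at this
  exact Filter.Tendsto.congr (fun t => (tanh_eq' t).symm) this

lemma artanh_zero : artanh 0 = 0 := by simp [artanh]

lemma artanh_neg (s : ℝ) : artanh (-s) = - artanh s := by
  unfold artanh
  rw [show (1 + -s) / (1 - -s) = ((1 + s)/(1 - s))⁻¹ by rw [inv_div]; ring_nf, Real.log_inv]
  ring

lemma artanh_le_artanh {s t : ℝ} (hs : -1 < s) (hst : s ≤ t) (ht : t < 1) :
    artanh s ≤ artanh t := by
  have h1s : (0:ℝ) < 1 + s := by linarith
  have h2s : (0:ℝ) < 1 - s := by linarith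
  have h1t : (0:ℝ) < 1 + t := by linarith
  have h2t : (0:ℝ) < 1 - t := by linarith
  unfold artanh
  have := Real.log_le_log (by positivity : (0:ℝ) < (1+s)/(1-s))
    (by rw [div_le_div_iff₀ h2s h2t]; nlinarith : (1+s)/(1-s) ≤ (1+t)/(1-t))
  linarith

lemma artanh_nonneg {s : ℝ} (h0 : 0 ≤ s) (h1 : s < 1) : 0 ≤ artanh s := by
  have := artanh_le_artanh (by norm_num : (-1:ℝ) < 0) h0 h1
  rwa [artanh_zero] at this

lemma abs_artanh_le_artanh {s c : ℝ} (hs : |s| ≤ c) (hc : c < 1) : |artanh s| ≤ artanh c := by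
  rw [abs_le] at hs
  rcases le_total 0 (artanh s) with h | h
  · rw [abs_of_nonneg h]
    exact artanh_le_artanh (by linarith) hs.2 hc
  · rw [abs_of_nonpos h, ← artanh_neg]
    exact artanh_le_artanh (by linarith) (by linarith) hc

lemma measurable_artanh : Measurable artanh := by
  unfold artanh
  exact (Real.measurable_log.comp ((measurable_const.add measurable_id).div
    (measurable_const.sub measurable_id))).const_mul _

lemma continuousOn_artanh : ContinuousOn artanh (Set.Ioo (-1 : ℝ) 1) := by
  unfold artanh
  apply ContinuousOn.mul continuousOn_const
  apply ContinuousOn.log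
  · exact ContinuousOn.div (by fun_prop) (by fun_prop)
      (fun x hx h => by have h2 := hx.2; have h3 := sub_eq_zero.mp h; linarith)
  · intro x hx
    have h1 : (0:ℝ) < 1 + x := by linarith [hx.1]
    have h2 : (0:ℝ) < 1 - x := by linarith [hx.2]
    positivity

lemma mem_uIoc_abs {s y : ℝ} (h : s ∈ Set.uIoc 0 y) : |s| ≤ |y| := by
  rcases Set.mem_uIoc.mp h with ⟨h1, h2⟩ | ⟨h1, h2⟩
  · rw [abs_of_pos h1]; exact le_trans h2 (le_abs_self y)
  · have hy : y < 0 := lt_of_lt_of_le h1 h2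
    rw [abs_of_nonpos h2, abs_of_neg hy]; linarith

lemma Ioc01_mem : Set.Ioc (0:ℝ) 1 ∈ nhdsWithin (0:ℝ) (Set.Ioi 0) := by
  have h1 : Set.Iic (1:ℝ) ∈ nhds (0:ℝ) := Iic_mem_nhds one_pos
  have := inter_mem (nhdsWithin_le_nhds h1) (self_mem_nhdsWithin (a := (0:ℝ)) (s := Set.Ioi 0))
  refine Filter.mem_of_superset this ?_
  rintro t ⟨ht1, ht0⟩
  exact ⟨ht0, ht1⟩

lemma tendsto_mul_artanh (ψ : ℝ → ℝ) (hψ : Continuous ψ) (s : ℝ) :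
    Tendsto (fun ε : ℝ => ψ (ε * artanh s)) (nhdsWithin 0 (Set.Ioi 0)) (nhds (ψ 0)) := by
  have h0 : Tendsto (fun ε : ℝ => ε * artanh s) (nhdsWithin 0 (Set.Ioi 0)) (nhds 0) := by
    have h : Continuous (fun ε : ℝ => ε * artanh s) := continuous_id.mul continuous_const
    have := h.tendsto (0 : ℝ)
    simp only [zero_mul] at this
    exact this.mono_left nhdsWithin_le_nhds
  exact (hψ.tendsto 0).comp h0

lemma tendsto_chi (ψ : ℝ → ℝ) (hψ : Continuous ψ) {y : ℝ} (hy : y ∈ Set.Ioo (-1:ℝ) 1) :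
    Tendsto (fun ε : ℝ => ∫ s in (0:ℝ)..y, ψ (ε * artanh s)) (nhdsWithin 0 (Set.Ioi 0))
      (nhds (ψ 0 * y)) := by
  have hy1 : |y| < 1 := abs_lt.mpr ⟨hy.1, hy.2⟩
  set c := artanh |y| with hc
  obtain ⟨C, hC⟩ := (isCompact_Icc (a := -c) (b := c)).exists_bound_of_continuousOn
    hψ.continuousOn
  have key : Tendsto (fun ε : ℝ => ∫ s in (0:ℝ)..y, ψ (ε * artanh s)) (nhdsWithin 0 (Set.Ioi 0))
      (nhds (∫ _ in (0:ℝ)..y, ψ 0)) := by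
    apply intervalIntegral.tendsto_integral_filter_of_dominated_convergence (fun _ => C)
    · filter_upwards with ε
      exact ((hψ.measurable.comp (measurable_artanh.const_mul ε)).aestronglyMeasurable)
    · filter_upwards [Ioc01_mem] with ε hε
      filter_upwards with s hs
      apply hC
      have habs : |artanh s| ≤ c := abs_artanh_le_artanh (mem_uIoc_abs hs) hy1
      have habs2 : |ε * artanh s| ≤ c := by
        rw [abs_mul, abs_of_pos hε.1]
        calc ε * |artanh s| ≤ 1 * |artanh s| :=
              mul_le_mul_of_nonneg_right hε.2 (abs_nonneg _)
          _ ≤ c := by rwa [one_mul]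
      rw [Set.mem_Icc]
      exact ⟨by linarith [(abs_le.mp habs2).1], (abs_le.mp habs2).2⟩
    · exact intervalIntegrable_const
    · filter_upwards with s
      exact fun _ => tendsto_mul_artanh ψ hψ s
  simpa [smul_eq_mul, mul_comm] using key

lemma tendsto_chi_tanh_pos (ψ : ℝ → ℝ) (hψ : Continuous ψ) {x : ℝ} (hx : 0 < x) :
    Tendsto (fun ε : ℝ => ∫ s in (0:ℝ)..(Real.tanh (x / ε)), ψ (ε * artanh s))
      (nhdsWithin 0 (Set.Ioi 0)) (nhds (ψ 0)) := by
  have hbt : Tendsto (fun ε : ℝ => Real.tanh (x / ε)) (nhdsWithin 0 (Set.Ioi 0)) (nhds 1) := by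
    have h1 : Tendsto (fun ε : ℝ => x / ε) (nhdsWithin 0 (Set.Ioi 0)) atTop := by
      simp only [div_eq_mul_inv]
      exact Tendsto.const_mul_atTop hx tendsto_inv_nhdsGT_zero
    exact tendsto_tanh_atTop.comp h1
  obtain ⟨C, hC⟩ := (isCompact_Icc (a := (0:ℝ)) (b := x)).exists_bound_of_continuousOn
    hψ.continuousOn
  have hC0 : 0 ≤ C := le_trans (norm_nonneg _) (hC 0 ⟨le_refl 0, hx.le⟩)
  set μ1 := volume.restrict (Set.Ioc (0:ℝ) 1) with hμ1
  have heq : ∀ ε ∈ Set.Ioi (0:ℝ),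
      (∫ s in (0:ℝ)..(Real.tanh (x / ε)), ψ (ε * artanh s))
        = ∫ s, Set.indicator (Set.Ioc 0 (Real.tanh (x / ε))) (fun s => ψ (ε * artanh s)) s ∂μ1 := by
    intro ε hε
    have hb0 : 0 ≤ Real.tanh (x / ε) := tanh_nonneg (le_of_lt (div_pos hx hε))
    have hb1 : Real.tanh (x / ε) ≤ 1 := (tanh_lt_one _).le
    rw [intervalIntegral.integral_of_le hb0, MeasureTheory.integral_indicator measurableSet_Ioc,
      hμ1, Measure.restrict_restrict measurableSet_Ioc,
      Set.inter_eq_left.mpr (Set.Ioc_subset_Ioc_right hb1)]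
  have key : Tendsto (fun ε : ℝ =>
      ∫ s, Set.indicator (Set.Ioc 0 (Real.tanh (x / ε))) (fun s => ψ (ε * artanh s)) s ∂μ1)
      (nhdsWithin 0 (Set.Ioi 0)) (nhds (∫ _, ψ 0 ∂μ1)) := by
    apply MeasureTheory.tendsto_integral_filter_of_dominated_convergence (fun _ => C)
    · filter_upwards with ε
      exact (((hψ.measurable.comp (measurable_artanh.const_mul ε)).indicator
        measurableSet_Ioc).aestronglyMeasurable)
    · filter_upwards [self_mem_nhdsWithin] with ε hε
      filter_upwards with s
      by_cases hs : s ∈ Set.Ioc 0 (Real.tanh (x / ε))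
      · rw [Set.indicator_of_mem hs]
        apply hC
        have hs1 : s < 1 := lt_of_le_of_lt hs.2 (tanh_lt_one _)
        have h1 : 0 ≤ artanh s := artanh_nonneg hs.1.le hs1
        have h2 : artanh s ≤ x / ε := by
          have := artanh_le_artanh (by linarith [hs.1] : (-1:ℝ) < s) hs.2 (tanh_lt_one _)
          rwa [artanh_tanh] at this
        have hε0 : (0:ℝ) < ε := hε
        have hxx : ε * (x / ε) = x := by field_simp
        have hmul := mul_le_mul_of_nonneg_left h2 hε0.le
        rw [hxx] at hmul
        exact ⟨by positivity, hmul⟩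
      · rw [Set.indicator_of_notMem hs]; simpa using hC0
    · exact MeasureTheory.integrableOn_const measure_Ioc_lt_top.ne
    · have h1 : ∀ᵐ s ∂μ1, s ∈ Set.Ioc (0:ℝ) 1 := ae_restrict_mem measurableSet_Ioc
      have h2 : ∀ᵐ s ∂μ1, s ≠ 1 := by
        refine Filter.Eventually.filter_mono (MeasureTheory.ae_mono Measure.restrict_le_self) ?_
        rw [MeasureTheory.ae_iff]
        have : {a : ℝ | ¬a ≠ 1} = {1} := by ext a; simp
        rw [this]
        exact Real.volume_singleton
      filter_upwards [h1, h2] with s hs hs1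
      have hslt : s < 1 := lt_of_le_of_ne hs.2 hs1
      have hev : ∀ᶠ ε in nhdsWithin (0:ℝ) (Set.Ioi 0),
          Set.indicator (Set.Ioc 0 (Real.tanh (x / ε))) (fun s => ψ (ε * artanh s)) s
            = ψ (ε * artanh s) := by
        filter_upwards [hbt.eventually (eventually_gt_nhds hslt)] with ε hε
        exact Set.indicator_of_mem (Set.mem_Ioc.mpr ⟨hs.1, hε.le⟩) _
      exact Tendsto.congr' (hev.mono fun ε h => h.symm) (tendsto_mul_artanh ψ hψ s)
  have hμ1univ : (∫ _, ψ 0 ∂μ1) = ψ 0 := by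
    rw [MeasureTheory.integral_const]
    simp [hμ1, Real.volume_Ioc]
  rw [← hμ1univ]
  exact key.congr' (by filter_upwards [self_mem_nhdsWithin] with ε hε using (heq ε hε).symm)

lemma tendsto_chi_tanh_neg (ψ : ℝ → ℝ) (hψ : Continuous ψ) {x : ℝ} (hx : x < 0) :
    Tendsto (fun ε : ℝ => ∫ s in (0:ℝ)..(Real.tanh (x / ε)), ψ (ε * artanh s))
      (nhdsWithin 0 (Set.Ioi 0)) (nhds (-ψ 0)) := by
  have hpos := tendsto_chi_tanh_pos (fun t => ψ (-t)) (hψ.comp continuous_neg)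
    (show 0 < -x by linarith)
  have hid : ∀ ε : ℝ, (∫ s in (0:ℝ)..(Real.tanh (x / ε)), ψ (ε * artanh s))
      = - ∫ s in (0:ℝ)..(Real.tanh (-x / ε)), ψ (-(ε * artanh s)) := by
    intro ε
    have h1 : ∫ s in (0:ℝ)..(Real.tanh (-x / ε)), ψ (-(ε * artanh s))
        = ∫ s in (0:ℝ)..(Real.tanh (-x / ε)), (fun t => ψ (ε * artanh t)) (-s) := by
      apply intervalIntegral.integral_congr
      intro s _
      simp [artanh_neg, mul_neg]
    rw [h1, intervalIntegral.integral_comp_neg (a := (0:ℝ)) (b := Real.tanh (-x / ε))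
      (fun t => ψ (ε * artanh t))]
    rw [show -Real.tanh (-x / ε) = Real.tanh (x / ε) by
      rw [neg_div, Real.tanh_neg]; ring]
    rw [neg_zero, intervalIntegral.integral_symm]
  have : Tendsto (fun ε : ℝ => - ∫ s in (0:ℝ)..(Real.tanh (-x / ε)), ψ (-(ε * artanh s)))
      (nhdsWithin 0 (Set.Ioi 0)) (nhds (-ψ (-0))) := by
    exact (hpos.neg).congr (fun ε => by simp [mul_neg])
  rw [neg_zero] at this
  exact Tendsto.congr (fun ε => (hid ε).symm) this

lemma continuous_tanh : Continuous Real.tanh := by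
  have : Real.tanh = fun x => Real.sinh x / Real.cosh x := by
    funext x; exact Real.tanh_eq_sinh_div_cosh x
  rw [this]
  exact Real.continuous_sinh.div Real.continuous_cosh (fun x => (Real.cosh_pos x).ne')

lemma abs_tanh (t : ℝ) : |Real.tanh t| = Real.tanh |t| := by
  rcases le_total 0 t with h | h
  · rw [abs_of_nonneg h, abs_of_nonneg (tanh_nonneg h)]
  · have h1 : 0 ≤ Real.tanh (-t) := tanh_nonneg (by linarith)
    rw [abs_of_nonpos h]
    rw [show |Real.tanh t| = |Real.tanh (-t)| by rw [Real.tanh_neg, abs_neg]]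
    rw [abs_of_nonneg h1]

lemma tanh_mem_Ioo (t : ℝ) : Real.tanh t ∈ Set.Ioo (-1 : ℝ) 1 :=
  ⟨neg_one_lt_tanh t, tanh_lt_one t⟩

lemma continuousOn_primitive_artanh (g : ℝ → ℝ) (hg : ContinuousOn g (Set.Ioo (-1:ℝ) 1)) :
    ContinuousOn (fun t => ∫ s in (0:ℝ)..t, g s) (Set.Ioo (-1:ℝ) 1) := by
  intro t ht
  have ht' : |t| < 1 := abs_lt.mpr ⟨ht.1, ht.2⟩
  set c := (|t| + 1) / 2 with hcdef
  have hc1 : c < 1 := by simp only [hcdef]; linarith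
  have htc : |t| < c := by simp only [hcdef]; linarith
  have hc0 : 0 ≤ c := by positivity
  have hsub : Set.uIcc (-c) c ⊆ Set.Ioo (-1:ℝ) 1 := by
    rw [Set.uIcc_of_le (by linarith : -c ≤ c)]
    intro z hz
    exact ⟨by linarith [hz.1], by linarith [hz.2]⟩
  have hint : IntervalIntegrable g volume (-c) c :=
    (hg.mono hsub).intervalIntegrable
  have hcont : ContinuousOn (fun b => ∫ s in (0:ℝ)..b, g s) (Set.uIcc (-c) c) :=
    intervalIntegral.continuousOn_primitive_interval' hint
      (by rw [Set.uIcc_of_le (by linarith : -c ≤ c)]; exact ⟨by linarith, by linarith⟩)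
  have hmem : Set.uIcc (-c) c ∈ nhds t := by
    rw [Set.uIcc_of_le (by linarith : -c ≤ c)]
    exact Icc_mem_nhds (by linarith [abs_lt.mp htc |>.1]) (abs_lt.mp htc |>.2)
  exact ((hcont.continuousAt hmem)).continuousWithinAt

/-- The regularized solutions `u_ε(x,y) = φ(x) + χ_ε(y) − χ_ε(tanh(x/ε))`, with
`χ_ε(t) = ∫₀^t ψ(ε·artanh s) ds`, of the characteristic problem `∂²u/∂x∂y = 0` with data on
`y = sgn x` obtained from the deformation `y = tanh(x/ε)` converge in the sense of
distributions on `ℝ × (−1,1)` to `φ(x) + ψ(0)·y − ψ(0)·sgn(x)`. -/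
theorem regularized_solution_tendsto_distribution (φ ψ : ℝ → ℝ)
    (hφ : ContDiff ℝ (⊤ : ℕ∞) φ) (hψ : ContDiff ℝ (⊤ : ℕ∞) ψ)
    (u : ℝ → ℝ → ℝ → ℝ)
    (hu : ∀ ε x y, u ε x y = φ x + (∫ s in (0:ℝ)..y, ψ (ε * artanh s))
      - ∫ s in (0:ℝ)..(Real.tanh (x / ε)), ψ (ε * artanh s))
    (θ : ℝ × ℝ → ℝ) (hθ : ContDiff ℝ (⊤ : ℕ∞) θ) (hθc : HasCompactSupport θ)
    (hθsupp : tsupport θ ⊆ Set.univ ×ˢ Set.Ioo (-1 : ℝ) 1) :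
    Filter.Tendsto
      (fun ε : ℝ => ∫ p : ℝ × ℝ, u ε p.1 p.2 * θ p)
      (nhdsWithin 0 (Set.Ioi 0))
      (nhds (∫ p : ℝ × ℝ, (φ p.1 + ψ 0 * p.2 - ψ 0 * Real.sign p.1) * θ p)) := by
  have hψc : Continuous ψ := hψ.continuous
  have hφc : Continuous φ := hφ.continuous
  have hθcont : Continuous θ := hθ.continuous
  set U : Set (ℝ × ℝ) := Set.univ ×ˢ Set.Ioo (-1:ℝ) 1 with hU
  have hUopen : IsOpen U := isOpen_univ.prod isOpen_Ioo
  -- bounds on the support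
  obtain ⟨a, ha0, ha1, haK⟩ : ∃ a : ℝ, 0 ≤ a ∧ a < 1 ∧ ∀ p ∈ tsupport θ, |p.2| ≤ a := by
    rcases (tsupport θ).eq_empty_or_nonempty with h | h
    · exact ⟨0, le_refl 0, one_pos, fun p hp => absurd hp (by simp [h])⟩
    · obtain ⟨p0, hp0K, hp0max⟩ := hθc.exists_isMaxOn h
        ((continuous_abs.comp continuous_snd).continuousOn)
      refine ⟨|p0.2|, abs_nonneg _, ?_, fun p hp => hp0max hp⟩
      exact abs_lt.mpr ⟨(hθsupp hp0K).2.1, (hθsupp hp0K).2.2⟩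
  obtain ⟨R, hR0, hRK⟩ : ∃ R : ℝ, 0 ≤ R ∧ ∀ p ∈ tsupport θ, |p.1| ≤ R := by
    rcases (tsupport θ).eq_empty_or_nonempty with h | h
    · exact ⟨0, le_refl 0, fun p hp => absurd hp (by simp [h])⟩
    · obtain ⟨p0, hp0K, hp0max⟩ := hθc.exists_isMaxOn h
        ((continuous_abs.comp continuous_fst).continuousOn)
      exact ⟨|p0.1|, abs_nonneg _, fun p hp => hp0max hp⟩
  -- bounds on φ and ψ
  obtain ⟨M1, hM1⟩ := (isCompact_Icc (a := -(artanh a)) (b := artanh a)).exists_bound_of_continuousOn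
    hψc.continuousOn
  obtain ⟨M2, hM2⟩ := (isCompact_Icc (a := -R) (b := R)).exists_bound_of_continuousOn
    hψc.continuousOn
  obtain ⟨M0, hM0⟩ := (isCompact_Icc (a := -R) (b := R)).exists_bound_of_continuousOn
    hφc.continuousOn
  have hart0 : 0 ≤ artanh a := artanh_nonneg ha0 ha1
  have hM1' : 0 ≤ M1 := le_trans (norm_nonneg _) (hM1 0 ⟨by linarith, hart0⟩)
  have hM2' : 0 ≤ M2 := le_trans (norm_nonneg _) (hM2 0 ⟨by linarith, hR0⟩)
  have hM0' : 0 ≤ M0 := le_trans (norm_nonneg _) (hM0 0 ⟨by linarith, hR0⟩)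
  set B : ℝ := M0 + M1 + M2 with hB
  set bound : ℝ × ℝ → ℝ := fun p => B * |θ p| with hbound
  apply MeasureTheory.tendsto_integral_filter_of_dominated_convergence bound
  · -- measurability
    filter_upwards with ε
    have hsupp : Function.support (fun p : ℝ × ℝ => u ε p.1 p.2 * θ p) ⊆ U := by
      intro p hp
      have : θ p ≠ 0 := fun h => hp (by simp [h])
      exact hθsupp (subset_tsupport θ this)
    have heq : (fun p : ℝ × ℝ => u ε p.1 p.2 * θ p)
        = U.indicator (fun p : ℝ × ℝ => u ε p.1 p.2 * θ p) :=
      (Set.indicator_eq_self.mpr hsupp).symm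
    rw [heq, aestronglyMeasurable_indicator_iff hUopen.measurableSet]
    apply ContinuousOn.aestronglyMeasurable (μ := volume) _ hUopen.measurableSet
    have hP : ContinuousOn (fun t => ∫ s in (0:ℝ)..t, ψ (ε * artanh s)) (Set.Ioo (-1:ℝ) 1) :=
      continuousOn_primitive_artanh _
        (hψc.comp_continuousOn (continuousOn_artanh.const_smul ε))
    have hcont : ContinuousOn (fun p : ℝ × ℝ =>
        (φ p.1 + (∫ s in (0:ℝ)..p.2, ψ (ε * artanh s))
          - ∫ s in (0:ℝ)..(Real.tanh (p.1 / ε)), ψ (ε * artanh s)) * θ p) U := by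
      apply ContinuousOn.mul _ hθcont.continuousOn
      apply ContinuousOn.sub
      · apply ContinuousOn.add (hφc.comp continuous_fst).continuousOn
        exact hP.comp continuous_snd.continuousOn (fun p hp => hp.2)
      · exact hP.comp (continuous_tanh.comp (continuous_fst.div_const ε)).continuousOn
          (fun p _ => tanh_mem_Ioo _)
    apply hcont.congr
    intro p _
    simp only [hu]
  · -- bound
    filter_upwards [Ioc01_mem] with ε hε
    filter_upwards with p
    by_cases hp : p ∈ tsupport θ
    · have hε0 : (0:ℝ) < ε := hε.1
      have hI1 : ‖∫ s in (0:ℝ)..p.2, ψ (ε * artanh s)‖ ≤ M1 := by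
        have h := intervalIntegral.norm_integral_le_of_norm_le_const
          (a := 0) (b := p.2) (C := M1) (f := fun s => ψ (ε * artanh s)) ?_
        · calc ‖∫ s in (0:ℝ)..p.2, ψ (ε * artanh s)‖ ≤ M1 * |p.2 - 0| := h
            _ ≤ M1 * 1 := by
                apply mul_le_mul_of_nonneg_left _ hM1'
                rw [sub_zero]; exact le_trans (haK p hp) (le_of_lt ha1)
            _ = M1 := mul_one M1
        · intro s hs
          apply hM1
          have h1 : |s| ≤ a := le_trans (mem_uIoc_abs hs) (haK p hp)
          have h2 : |artanh s| ≤ artanh a := abs_artanh_le_artanh h1 ha1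
          have h3 : |ε * artanh s| ≤ artanh a := by
            rw [abs_mul, abs_of_pos hε0]
            calc ε * |artanh s| ≤ 1 * |artanh s| :=
                  mul_le_mul_of_nonneg_right hε.2 (abs_nonneg _)
              _ ≤ artanh a := by rwa [one_mul]
          exact ⟨(abs_le.mp h3).1, (abs_le.mp h3).2⟩
      have hI2 : ‖∫ s in (0:ℝ)..(Real.tanh (p.1 / ε)), ψ (ε * artanh s)‖ ≤ M2 := by
        have h := intervalIntegral.norm_integral_le_of_norm_le_const
          (a := 0) (b := Real.tanh (p.1 / ε)) (C := M2) (f := fun s => ψ (ε * artanh s)) ?_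
        · calc ‖∫ s in (0:ℝ)..(Real.tanh (p.1 / ε)), ψ (ε * artanh s)‖
              ≤ M2 * |Real.tanh (p.1 / ε) - 0| := h
            _ ≤ M2 * 1 := by
                apply mul_le_mul_of_nonneg_left _ hM2'
                rw [sub_zero, abs_tanh]
                exact (tanh_lt_one _).le
            _ = M2 := mul_one M2
        · intro s hs
          apply hM2
          have h1 : |s| ≤ |Real.tanh (p.1 / ε)| := mem_uIoc_abs hs
          have h1' : |Real.tanh (p.1 / ε)| = Real.tanh (|p.1| / ε) := by
            rw [abs_tanh, abs_div, abs_of_pos hε0]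
          have h2 : |artanh s| ≤ |p.1| / ε := by
            have := abs_artanh_le_artanh (h1.trans_eq h1') (tanh_lt_one _)
            rwa [artanh_tanh] at this
          have h3 : |ε * artanh s| ≤ R := by
            rw [abs_mul, abs_of_pos hε0]
            have := mul_le_mul_of_nonneg_left h2 hε0.le
            rw [mul_div_cancel₀ _ (ne_of_gt hε0)] at this
            exact le_trans this (hRK p hp)
          exact ⟨(abs_le.mp h3).1, (abs_le.mp h3).2⟩
      have hI0 : ‖φ p.1‖ ≤ M0 := by
        apply hM0
        exact ⟨(abs_le.mp (hRK p hp)).1, (abs_le.mp (hRK p hp)).2⟩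
      rw [hu]
      calc ‖(φ p.1 + (∫ s in (0:ℝ)..p.2, ψ (ε * artanh s))
            - ∫ s in (0:ℝ)..(Real.tanh (p.1 / ε)), ψ (ε * artanh s)) * θ p‖
          = ‖φ p.1 + (∫ s in (0:ℝ)..p.2, ψ (ε * artanh s))
            - ∫ s in (0:ℝ)..(Real.tanh (p.1 / ε)), ψ (ε * artanh s)‖ * ‖θ p‖ := norm_mul _ _
        _ ≤ B * |θ p| := by
            apply mul_le_mul_of_nonneg_right _ (norm_nonneg _) |>.trans_eq (by rw [Real.norm_eq_abs])
            calc ‖φ p.1 + (∫ s in (0:ℝ)..p.2, ψ (ε * artanh s))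
                  - ∫ s in (0:ℝ)..(Real.tanh (p.1 / ε)), ψ (ε * artanh s)‖
                ≤ ‖φ p.1 + (∫ s in (0:ℝ)..p.2, ψ (ε * artanh s))‖
                  + ‖∫ s in (0:ℝ)..(Real.tanh (p.1 / ε)), ψ (ε * artanh s)‖ := norm_sub_le _ _
              _ ≤ (‖φ p.1‖ + ‖∫ s in (0:ℝ)..p.2, ψ (ε * artanh s)‖)
                  + ‖∫ s in (0:ℝ)..(Real.tanh (p.1 / ε)), ψ (ε * artanh s)‖ := by
                    exact add_le_add (norm_add_le _ _) le_rfl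
              _ ≤ B := by rw [hB]; linarith
    · have hz : θ p = 0 := image_eq_zero_of_notMem_tsupport hp
      rw [hz]
      simp [hbound, hz]
  · -- integrability of the bound
    apply Continuous.integrable_of_hasCompactSupport
    · exact continuous_const.mul hθcont.abs
    · exact (hθc.abs).mul_left
  · -- a.e. convergence
    have hae : ∀ᵐ p : ℝ × ℝ, p.1 ≠ 0 := by
      rw [MeasureTheory.ae_iff]
      have hset : {p : ℝ × ℝ | ¬p.1 ≠ 0} = ({0} : Set ℝ) ×ˢ (Set.univ : Set ℝ) := by
        ext p
        constructor
        · intro h; exact ⟨by simpa using h, trivial⟩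
        · intro h; simpa using h.1
      rw [hset, Measure.volume_eq_prod, Measure.prod_prod]
      simp
    filter_upwards [hae] with p hp
    by_cases hθp : θ p = 0
    · simp only [hθp, mul_zero]
      exact tendsto_const_nhds
    · have hpK : p ∈ tsupport θ := subset_tsupport θ hθp
      have hy : p.2 ∈ Set.Ioo (-1:ℝ) 1 := (hθsupp hpK).2
      have htu : Tendsto (fun ε : ℝ => u ε p.1 p.2) (nhdsWithin 0 (Set.Ioi 0))
          (nhds (φ p.1 + ψ 0 * p.2 - ψ 0 * Real.sign p.1)) := by
        have h1 := tendsto_chi ψ hψc hy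
        rcases hp.lt_or_gt with hneg | hpos
        · have h2 := tendsto_chi_tanh_neg ψ hψc hneg
          have := (tendsto_const_nhds (x := φ p.1)
            (f := nhdsWithin (0:ℝ) (Set.Ioi 0))).add h1 |>.sub h2
          rw [Real.sign_of_neg hneg]
          convert this.congr (fun ε => (hu ε p.1 p.2).symm) using 2
          ring
        · have h2 := tendsto_chi_tanh_pos ψ hψc hpos
          have := (tendsto_const_nhds (x := φ p.1)
            (f := nhdsWithin (0:ℝ) (Set.Ioi 0))).add h1 |>.sub h2
          rw [Real.sign_of_pos hpos]
          convert this.congr (fun ε => (hu ε p.1 p.2).symm) using 2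
          ring
      exact htu.mul_const (θ p)
end
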